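/- If α ≤ 1/2, then the minimal nonnegative solution m of x = G(x) satisfies 1ᵀm = 1; in particular m is stochastic. -/

import Mathlib

/-!
Summing the fixed-point equation with the column-stochasticity of `R` shows that `s = 1ᵀm`
solves `α s² - s + (1 - α) = 0`, whose roots are `1` and `(1 - α) / α ≥ 1`. To pick the root `1`
it suffices to exhibit one nonnegative fixed point of mass at most `1`: the iterates `Gᵏ 0`
increase (monotonicity of `G` on the cone), keep mass at most `1` (since `α s² + 1 - α ≤ 1` for
`s ∈ [0, 1]`), and their limit is such a fixed point, which dominates `m`.
-/

noncomputable def Gmap (n : ℕ) (α : ℝ) (v : Fin n → ℝ)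
    (R : Matrix (Fin n) (Fin n × Fin n) ℝ) (x : Fin n → ℝ) : Fin n → ℝ :=
  α • R.mulVec (fun p => x p.1 * x p.2) + (1 - α) • v

section Gmap

variable {n : ℕ} {α : ℝ} {v : Fin n → ℝ} {R : Matrix (Fin n) (Fin n × Fin n) ℝ}

lemma Gmap_apply (x : Fin n → ℝ) (i : Fin n) :
    Gmap n α v R x i = α * ∑ j, R i j * (x j.1 * x j.2) + (1 - α) * v i := by
  simp [Gmap, Matrix.mulVec, dotProduct]

lemma sum_Gmap (hv1 : ∑ i, v i = 1) (hRs : ∀ j, ∑ i, R i j = 1) (x : Fin n → ℝ) :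
    ∑ i, Gmap n α v R x i = α * (∑ i, x i) ^ 2 + (1 - α) := by
  have hcol (j : Fin n × Fin n) : ∑ i, R i j * (x j.1 * x j.2) = x j.1 * x j.2 := by
    rw [← Finset.sum_mul, hRs, one_mul]
  simp only [Gmap_apply]
  rw [Finset.sum_add_distrib, ← Finset.mul_sum, ← Finset.mul_sum, hv1, mul_one, Finset.sum_comm,
    Finset.sum_congr rfl fun j _ => hcol j, sq, Finset.sum_mul_sum, Fintype.sum_prod_type]

lemma Gmap_nonneg (hα0 : 0 ≤ α) (hα1 : α ≤ 1) (hv : ∀ i, 0 ≤ v i) (hR : ∀ i j, 0 ≤ R i j)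
    {x : Fin n → ℝ} (hx : 0 ≤ x) : 0 ≤ Gmap n α v R x := by
  intro i
  rw [Pi.zero_apply, Gmap_apply]
  have hquad : 0 ≤ ∑ j, R i j * (x j.1 * x j.2) :=
    Finset.sum_nonneg fun j _ => mul_nonneg (hR i j) (mul_nonneg (hx j.1) (hx j.2))
  exact add_nonneg (mul_nonneg hα0 hquad) (mul_nonneg (sub_nonneg.2 hα1) (hv i))

lemma Gmap_mono (hα0 : 0 ≤ α) (hR : ∀ i j, 0 ≤ R i j) {a b : Fin n → ℝ} (ha : 0 ≤ a)
    (hab : a ≤ b) : Gmap n α v R a ≤ Gmap n α v R b := by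
  intro i
  rw [Gmap_apply, Gmap_apply]
  have hquad : ∑ j, R i j * (a j.1 * a j.2) ≤ ∑ j, R i j * (b j.1 * b j.2) :=
    Finset.sum_le_sum fun j _ => mul_le_mul_of_nonneg_left
      (mul_le_mul (hab j.1) (hab j.2) (ha j.2) ((ha j.1).trans (hab j.1))) (hR i j)
  gcongr

lemma continuous_Gmap : Continuous (Gmap n α v R) := by
  unfold Gmap
  fun_prop

variable (hα0 : 0 ≤ α) (hα1 : α ≤ 1) (hv : ∀ i, 0 ≤ v i) (hR : ∀ i j, 0 ≤ R i j)
include hα0 hα1 hv hR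

lemma Gmap_iterate_nonneg (k : ℕ) : 0 ≤ (Gmap n α v R)^[k] 0 := by
  induction k with
  | zero => exact le_rfl
  | succ k ih =>
    rw [Function.iterate_succ_apply']
    exact Gmap_nonneg hα0 hα1 hv hR ih

lemma monotone_Gmap_iterate : Monotone fun k => (Gmap n α v R)^[k] 0 := by
  refine monotone_nat_of_le_succ fun k => ?_
  induction k with
  | zero => exact Gmap_nonneg hα0 hα1 hv hR le_rfl
  | succ k ih =>
    rw [Function.iterate_succ_apply', Function.iterate_succ_apply' _ (k + 1)]
    exact Gmap_mono hα0 hR (Gmap_iterate_nonneg hα0 hα1 hv hR k) ih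

lemma sum_Gmap_iterate_le_one (hv1 : ∑ i, v i = 1) (hRs : ∀ j, ∑ i, R i j = 1) (k : ℕ) :
    ∑ i, (Gmap n α v R)^[k] 0 i ≤ 1 := by
  induction k with
  | zero => simp
  | succ k ih =>
    rw [Function.iterate_succ_apply', sum_Gmap hv1 hRs]
    have hs0 : 0 ≤ ∑ i, (Gmap n α v R)^[k] 0 i :=
      Finset.sum_nonneg fun i _ => Gmap_iterate_nonneg hα0 hα1 hv hR k i
    nlinarith [pow_le_one₀ hs0 ih (n := 2)]

lemma exists_fixedPoint_Gmap_sum_le_one (hv1 : ∑ i, v i = 1) (hRs : ∀ j, ∑ i, R i j = 1) :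
    ∃ z, 0 ≤ z ∧ Gmap n α v R z = z ∧ ∑ i, z i ≤ 1 := by
  set x : ℕ → Fin n → ℝ := fun k => (Gmap n α v R)^[k] 0
  have hsum := sum_Gmap_iterate_le_one hα0 hα1 hv hR hv1 hRs
  have hbdd : BddAbove (Set.range x) := by
    refine ⟨1, ?_⟩
    rintro _ ⟨k, rfl⟩ i
    exact (Finset.single_le_sum (fun j _ => Gmap_iterate_nonneg hα0 hα1 hv hR k j)
      (Finset.mem_univ i)).trans (hsum k)
  have hlim : Filter.Tendsto x Filter.atTop (nhds (⨆ k, x k)) :=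
    tendsto_atTop_ciSup (monotone_Gmap_iterate hα0 hα1 hv hR) hbdd
  refine ⟨⨆ k, x k, le_ciSup hbdd 0,
    isFixedPt_of_tendsto_iterate hlim continuous_Gmap.continuousAt, ?_⟩
  exact le_of_tendsto ((continuous_finsetSum _ fun i _ => continuous_apply i).tendsto _ |>.comp
    hlim) (Filter.Eventually.of_forall hsum)

end Gmap

lemma eq_one_of_mul_sq_add_one_sub_eq {α s : ℝ} (hα0 : 0 ≤ α) (hα2 : α ≤ 1 / 2) (hs : s ≤ 1)
    (h : α * s ^ 2 + (1 - α) = s) : s = 1 := by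
  have hfactor : (s - 1) * (α * s - (1 - α)) = 0 := by linear_combination h
  rcases mul_eq_zero.1 hfactor with h1 | h2
  · linarith
  · have hα_half : α = 1 / 2 := by nlinarith [mul_nonneg hα0 (sub_nonneg.2 hs)]
    subst hα_half
    linarith

theorem stmt_8_general (n : ℕ) (α : ℝ) (hα : α ∈ Set.Ioo (0:ℝ) 1)
    (hα2 : α ≤ 1 / 2)
    (v : Fin n → ℝ) (hv : ∀ i, 0 ≤ v i) (hv1 : ∑ i, v i = 1)
    (R : Matrix (Fin n) (Fin n × Fin n) ℝ) (hR : ∀ i j, 0 ≤ R i j)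
    (hRs : ∀ j, ∑ i, R i j = 1)
    (m : Fin n → ℝ) (hmfix : Gmap n α v R m = m)
    (hmin : ∀ z : Fin n → ℝ, (∀ i, 0 ≤ z i) → Gmap n α v R z = z → ∀ i, m i ≤ z i) :
    ∑ i, m i = 1 := by
  obtain ⟨z, hz0, hzfix, hzsum⟩ :=
    exists_fixedPoint_Gmap_sum_le_one hα.1.le (by linarith) hv hR hv1 hRs
  have hm_le : ∑ i, m i ≤ 1 := (Finset.sum_le_sum fun i _ => hmin z hz0 hzfix i).trans hzsum
  refine eq_one_of_mul_sq_add_one_sub_eq hα.1.le hα2 hm_le ?_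
  rw [← sum_Gmap hv1 hRs, hmfix]

theorem stmt_8 (n : ℕ) (hn : 1 ≤ n) (α : ℝ) (hα : α ∈ Set.Ioo (0:ℝ) 1)
    (hα2 : α ≤ 1 / 2)
    (v : Fin n → ℝ) (hv : ∀ i, 0 ≤ v i) (hv1 : ∑ i, v i = 1)
    (R : Matrix (Fin n) (Fin n × Fin n) ℝ) (hR : ∀ i j, 0 ≤ R i j)
    (hRs : ∀ j, ∑ i, R i j = 1)
    (m : Fin n → ℝ) (hm0 : ∀ i, 0 ≤ m i) (hmfix : Gmap n α v R m = m)
    (hmin : ∀ z : Fin n → ℝ, (∀ i, 0 ≤ z i) → Gmap n α v R z = z → ∀ i, m i ≤ z i) :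
    ∑ i, m i = 1 :=
  stmt_8_general n α hα hα2 v hv hv1 R hR hRs m hmfix hmin
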